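/- arXiv:2012.08043 — 5 statements merged into one kernel-verified Lean document; each statement's English description precedes it below -/
import Mathlib

section
/- Let 𝒜 be a category with pullbacks and ℳ a class of morphisms in 𝒜. Then ℳ is the right class of an orthogonal factorization system (ℰ, ℳ) on 𝒜 if, and only if, the following three conditions hold: (1) ℳ is closed under composition; (2) ℳ is stable under pullback; (3) for every object B of 𝒜, the full subcategory ℳ/B of the slice category 𝒜/B, spanned by the objects whose underlying morphism lies in ℳ, is reflective in 𝒜/B. -/
/-!
A right class `M` is exactly the class of morphisms right orthogonal to `E`, and right orthogonal
classes are closed under composition and pullback; factoring `f : X ⟶ B` as `e ≫ m` exhibits `m`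
as the reflection of `f` into `M/B`, with unit `e`.

Conversely, take `E` to be the class of morphisms left orthogonal to `M` and factor `f` through
the unit `e` of its reflection into `M/B`. To fill a square from `e` to some `m ∈ M`, pull `m` back
to the codomain of `e`: the pulled-back morphism, composed with the reflection, is an object of
`M/B`, so the universal property of `e` yields a section of it, and hence the fill-in.
-/

open CategoryTheory CategoryTheory.Limits

universe v u

namespace Burroni

variable {A : Type u} [Category.{v} A]

/-- A morphism `e` is left orthogonal to a morphism `m` if every commutative
square from `e` to `m` admits a unique diagonal fill-in. -/
def LeftOrthogonal {A₁ A₂ X Y : A} (e : A₁ ⟶ A₂) (m : X ⟶ Y) : Prop :=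
  ∀ (u : A₁ ⟶ X) (v : A₂ ⟶ Y), u ≫ m = e ≫ v →
    ∃! w : A₂ ⟶ X, e ≫ w = u ∧ w ≫ m = v

/-- An orthogonal factorization system `(E, M)`: both classes are closed under
composition with isomorphisms, every morphism factors as an `E`-morphism
followed by an `M`-morphism, and every `E`-morphism is left orthogonal to every
`M`-morphism. -/
structure IsOFS (E M : MorphismProperty A) : Prop where
  respectsIso_E : E.RespectsIso
  respectsIso_M : M.RespectsIso
  factor : ∀ {X Y : A} (f : X ⟶ Y),
    ∃ (Z : A) (e : X ⟶ Z) (m : Z ⟶ Y), E e ∧ M m ∧ e ≫ m = f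
  orth : ∀ {A₁ A₂ X Y : A} (e : A₁ ⟶ A₂) (m : X ⟶ Y), E e → M m → LeftOrthogonal e m

end Burroni

open MorphismProperty

namespace Burroni

variable {A : Type u} [Category.{v} A]

theorem LeftOrthogonal.comp {A₁ A₂ X Y Z : A} {e : A₁ ⟶ A₂} {f : X ⟶ Y} {g : Y ⟶ Z}
    (hf : LeftOrthogonal e f) (hg : LeftOrthogonal e g) : LeftOrthogonal e (f ≫ g) := by
  intro u v huv
  obtain ⟨k, ⟨hek, hkg⟩, hk_uniq⟩ := hg (u ≫ f) v (by rw [Category.assoc, huv])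
  obtain ⟨w, ⟨hew, hwf⟩, hw_uniq⟩ := hf u k hek.symm
  refine ⟨w, ⟨hew, by rw [← Category.assoc, hwf, hkg]⟩, fun w' ⟨hew', hw'v⟩ => hw_uniq w' ⟨hew', ?_⟩⟩
  exact hk_uniq (w' ≫ f) ⟨by rw [← Category.assoc, hew'], by rw [Category.assoc, hw'v]⟩

theorem LeftOrthogonal.of_isPullback {A₁ A₂ P X Y Z : A} {e : A₁ ⟶ A₂} {fst : P ⟶ X}
    {snd : P ⟶ Y} {f : X ⟶ Z} {g : Y ⟶ Z} (hg : LeftOrthogonal e g)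
    (hP : IsPullback fst snd f g) : LeftOrthogonal e fst := by
  intro u v huv
  obtain ⟨k, ⟨hek, hkg⟩, hk_uniq⟩ := hg (u ≫ snd) (v ≫ f)
    (by rw [Category.assoc, ← hP.w, ← Category.assoc, huv, Category.assoc])
  refine ⟨hP.lift v k hkg.symm, ⟨hP.hom_ext ?_ ?_, hP.lift_fst _ _ _⟩, ?_⟩
  · rw [Category.assoc, hP.lift_fst, huv]
  · rw [Category.assoc, hP.lift_snd, hek]
  · rintro w ⟨rfl, rfl⟩
    have hwk : w ≫ snd = k := hk_uniq _
      ⟨by rw [Category.assoc], by rw [Category.assoc, Category.assoc, hP.w]⟩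
    exact hP.hom_ext (by rw [hP.lift_fst]) (by rw [hP.lift_snd, hwk])

theorem isIso_of_leftOrthogonal_comp {X Z Y : A} {e : X ⟶ Z} {m : Z ⟶ Y}
    (hm : LeftOrthogonal e m) (hem : LeftOrthogonal e (e ≫ m)) : IsIso e := by
  obtain ⟨r, ⟨her, hrm⟩, -⟩ := hem (𝟙 X) m (Category.id_comp _)
  obtain ⟨d, -, hd_uniq⟩ := hm e m rfl
  have hre : r ≫ e = 𝟙 Z := (hd_uniq _ ⟨by rw [reassoc_of% her], by rw [Category.assoc, hrm]⟩).trans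
    (hd_uniq _ ⟨Category.comp_id e, Category.id_comp m⟩).symm
  exact ⟨r, her, hre⟩

theorem IsOFS.mem_right_iff {E M : MorphismProperty A} (h : IsOFS E M) {X Y : A} (f : X ⟶ Y) :
    M f ↔ ∀ ⦃A₁ A₂ : A⦄ (e : A₁ ⟶ A₂), E e → LeftOrthogonal e f := by
  refine ⟨fun hf _ _ e he => h.orth e f he hf, fun hf => ?_⟩
  obtain ⟨Z, e, m, he, hm, rfl⟩ := h.factor f
  have := isIso_of_leftOrthogonal_comp (h.orth e m he hm) (hf e he)
  have := h.respectsIso_M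
  exact RespectsIso.precomp M e m hm

def LeftOrthogonalAlong {A₁ A₂ X Y : A} (e : A₁ ⟶ A₂) (m : X ⟶ Y) (v : A₂ ⟶ Y) : Prop :=
  ∀ u : A₁ ⟶ X, u ≫ m = e ≫ v → ∃! w : A₂ ⟶ X, e ≫ w = u ∧ w ≫ m = v

/-- The factorization `e ≫ r` exhibits `r` as the reflection of `e ≫ r` into `M/Y`, with unit `e`:
maps in `A/Y` from `e ≫ r` into objects of `M/Y` are the squares with bottom edge `r`. -/
def IsSliceReflection (M : MorphismProperty A) {X Z Y : A} (e : X ⟶ Z) (r : Z ⟶ Y) : Prop :=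
  M r ∧ ∀ ⦃W : A⦄ (q : W ⟶ Y), M q → LeftOrthogonalAlong e q r

theorem IsOFS.isSliceReflection {E M : MorphismProperty A} (h : IsOFS E M) {X Z Y : A}
    {e : X ⟶ Z} {m : Z ⟶ Y} (he : E e) (hm : M m) : IsSliceReflection M e m :=
  ⟨hm, fun _ q hq u => h.orth e q he hq u m⟩

theorem isRightAdjoint_iff_exists_universal {C D : Type*} [Category C] [Category D] (G : D ⥤ C) :
    G.IsRightAdjoint ↔ ∀ X : C, ∃ (Y : D) (η : X ⟶ G.obj Y),
      ∀ (Y' : D) (f : X ⟶ G.obj Y'), ∃! t : Y ⟶ Y', η ≫ G.map t = f := by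
  rw [isRightAdjoint_iff_hasInitial_structuredArrow]
  refine forall_congr' fun X => ⟨fun _ => ?_, fun ⟨Y, η, hη⟩ => ?_⟩
  · exact ⟨(⊥_ StructuredArrow X G).right, (⊥_ StructuredArrow X G).hom, fun Y' f =>
      StructuredArrow.IsUniversal.existsUnique initialIsInitial (StructuredArrow.mk f)⟩
  · choose t ht ht_uniq using hη
    exact (IsInitial.ofUniqueHom (X := StructuredArrow.mk η)
      (fun g => StructuredArrow.homMk (t g.right g.hom) (ht _ _))
      (fun g m => StructuredArrow.ext _ _ (ht_uniq _ _ _ (StructuredArrow.w m)))).hasInitial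

theorem isRightAdjoint_ι_over_iff (M : MorphismProperty A) (B : A) :
    (ObjectProperty.ι (fun f : Over B => M f.hom)).IsRightAdjoint ↔
      ∀ ⦃X : A⦄ (f : X ⟶ B), ∃ (Z : A) (e : X ⟶ Z) (r : Z ⟶ B),
        e ≫ r = f ∧ IsSliceReflection M e r := by
  rw [isRightAdjoint_iff_exists_universal]
  constructor
  · intro h X f
    obtain ⟨R, η, hη⟩ := h (Over.mk f)
    refine ⟨R.obj.left, η.left, R.obj.hom, Over.w η, R.property, fun W q hq u hu => ?_⟩
    obtain ⟨t, ht, ht_uniq⟩ := hη ⟨Over.mk q, hq⟩ (Over.homMk u (hu.trans (Over.w η)))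
    refine ⟨t.hom.left, ⟨congrArg CommaMorphism.left ht, Over.w t.hom⟩, ?_⟩
    rintro w ⟨hw, hwq⟩
    have := ht_uniq (ObjectProperty.homMk (Over.homMk w hwq)) (Over.OverMorphism.ext hw)
    exact congrArg (fun t => t.hom.left) this
  · intro h X
    obtain ⟨Z, e, r, her, hr, hr_univ⟩ := h X.hom
    refine ⟨⟨Over.mk r, hr⟩, Over.homMk e her, fun n f => ?_⟩
    obtain ⟨w, ⟨hw, hwq⟩, hw_uniq⟩ := hr_univ n.obj.hom n.property f.left ((Over.w f).trans her.symm)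
    refine ⟨ObjectProperty.homMk (Over.homMk w hwq), Over.OverMorphism.ext hw, fun t ht => ?_⟩
    exact ObjectProperty.hom_ext _ (Over.OverMorphism.ext
      (hw_uniq t.hom.left ⟨congrArg CommaMorphism.left ht, Over.w t.hom⟩))

theorem LeftOrthogonalAlong.of_isPullback {A₁ A₂ P X Y : A} {e : A₁ ⟶ A₂} {m : X ⟶ Y}
    {v : A₂ ⟶ Y} {fst : P ⟶ X} {snd : P ⟶ A₂} (hP : IsPullback fst snd m v)
    (h : LeftOrthogonalAlong e snd (𝟙 A₂)) : LeftOrthogonalAlong e m v := by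
  intro u hu
  obtain ⟨s, ⟨hes, hs⟩, hs_uniq⟩ := h (hP.lift u e hu) (by rw [hP.lift_snd, Category.comp_id])
  refine ⟨s ≫ fst, ⟨by rw [reassoc_of% hes, hP.lift_fst], ?_⟩, ?_⟩
  · rw [Category.assoc, hP.w, reassoc_of% hs]
  · rintro w ⟨rfl, hwm⟩
    have hws : hP.lift w (𝟙 A₂) (by rw [hwm, Category.id_comp]) = s :=
      hs_uniq _ ⟨hP.hom_ext (by simp) (by simp), hP.lift_snd _ _ _⟩
    rw [← hws, hP.lift_fst]

namespace IsSliceReflection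

variable {M : MorphismProperty A} {X Z Y : A} {e : X ⟶ Z} {r : Z ⟶ Y}

theorem eq_id (h : IsSliceReflection M e r) {k : Z ⟶ Z} (hek : e ≫ k = e) (hkr : k ≫ r = r) :
    k = 𝟙 Z := by
  obtain ⟨d, -, hd_uniq⟩ := h.2 r h.1 e rfl
  exact (hd_uniq k ⟨hek, hkr⟩).trans (hd_uniq _ ⟨Category.comp_id e, Category.id_comp r⟩).symm

theorem leftOrthogonalAlong_id [M.IsStableUnderComposition] (h : IsSliceReflection M e r)
    {W : A} {m : W ⟶ Z} (hm : M m) : LeftOrthogonalAlong e m (𝟙 Z) := by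
  intro u hu
  rw [Category.comp_id] at hu
  obtain ⟨t, ⟨het, htr⟩, ht_uniq⟩ := h.2 (m ≫ r) (M.comp_mem _ _ hm h.1) u
    (by rw [reassoc_of% hu])
  have htm : t ≫ m = 𝟙 Z :=
    h.eq_id (by rw [reassoc_of% het, hu]) (by rw [Category.assoc, htr])
  refine ⟨t, ⟨het, htm⟩, fun w ⟨hew, hwm⟩ => ht_uniq w ⟨hew, ?_⟩⟩
  rw [reassoc_of% hwm]

theorem leftOrthogonal [HasPullbacks A] [M.IsStableUnderComposition] [M.IsStableUnderBaseChange]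
    (h : IsSliceReflection M e r) {W V : A} {m : W ⟶ V} (hm : M m) : LeftOrthogonal e m :=
  fun _ v => LeftOrthogonalAlong.of_isPullback (IsPullback.of_hasPullback m v)
    (h.leftOrthogonalAlong_id (M.pullback_snd m v hm)) _

end IsSliceReflection

theorem IsSliceReflection.isIso_of_comp_eq_id {M : MorphismProperty A} {X Z : A}
    {e : X ⟶ Z} {r : Z ⟶ X} (h : IsSliceReflection M e r)
    (her : e ≫ r = 𝟙 X) : IsIso e :=
  ⟨r, her, h.eq_id (by rw [reassoc_of% her]) (by rw [Category.assoc, her, Category.comp_id])⟩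

section Complement

def leftOrthogonalComplement (M : MorphismProperty A) : MorphismProperty A :=
  fun _ _ e => ∀ ⦃X Y : A⦄ (m : X ⟶ Y), M m → LeftOrthogonal e m

theorem LeftOrthogonal.comp_left {A₁ A₂ A₃ X Y : A} {e₁ : A₁ ⟶ A₂} {e₂ : A₂ ⟶ A₃}
    {m : X ⟶ Y} (h₁ : LeftOrthogonal e₁ m) (h₂ : LeftOrthogonal e₂ m) :
    LeftOrthogonal (e₁ ≫ e₂) m := by
  intro u v huv
  obtain ⟨k, ⟨hek, hkm⟩, hk_uniq⟩ := h₁ u (e₂ ≫ v) (by rw [huv, Category.assoc])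
  obtain ⟨w, ⟨hew, hwm⟩, hw_uniq⟩ := h₂ k v hkm
  refine ⟨w, ⟨by rw [Category.assoc, hew, hek], hwm⟩, fun w' ⟨hew', hw'm⟩ => hw_uniq w' ⟨?_, hw'm⟩⟩
  exact hk_uniq (e₂ ≫ w') ⟨by rw [← Category.assoc, hew'], by rw [Category.assoc, hw'm]⟩

theorem leftOrthogonal_of_isIso {A₁ A₂ X Y : A} (e : A₁ ⟶ A₂) [IsIso e] (m : X ⟶ Y) :
    LeftOrthogonal e m := by
  intro u v huv
  refine ⟨inv e ≫ u, ⟨by simp, by rw [Category.assoc, huv, IsIso.inv_hom_id_assoc]⟩, ?_⟩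
  rintro w ⟨rfl, -⟩
  simp

variable (M : MorphismProperty A)

instance : (leftOrthogonalComplement M).IsStableUnderComposition where
  comp_mem _ _ h₁ h₂ _ _ m hm := (h₁ m hm).comp_left (h₂ m hm)

theorem isomorphisms_le_leftOrthogonalComplement :
    isomorphisms A ≤ leftOrthogonalComplement M :=
  fun _ _ e (_ : IsIso e) _ _ m _ => leftOrthogonal_of_isIso e m

theorem isOFS_leftOrthogonalComplement [HasPullbacks A] [M.IsStableUnderComposition]
    [M.IsStableUnderBaseChange]
    (hrefl : ∀ (Y : A) ⦃X : A⦄ (f : X ⟶ Y), ∃ (Z : A) (e : X ⟶ Z) (r : Z ⟶ Y),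
      e ≫ r = f ∧ IsSliceReflection M e r) :
    IsOFS (leftOrthogonalComplement M) M := by
  have : M.ContainsIdentities := ⟨fun B => by
    obtain ⟨Z, e, r, her, hr⟩ := hrefl B (𝟙 B)
    have := hr.isIso_of_comp_eq_id her
    exact her ▸ RespectsIso.precomp M e r hr.1⟩
  refine ⟨respectsIso_of_isStableUnderComposition (isomorphisms_le_leftOrthogonalComplement M),
    inferInstance, fun f => ?_, fun e m he hm => he m hm⟩
  obtain ⟨Z, e, r, rfl, hr⟩ := hrefl _ f
  exact ⟨Z, e, r, fun _ _ m hm => hr.leftOrthogonal hm, hr.1, rfl⟩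

end Complement

end Burroni

open Burroni

/-- for a category `A` with pullbacks, a class `M` of morphisms is
the right class of an orthogonal factorization system iff it is closed under
composition, stable under pullback, and `M/B` is reflective in `A/B` for every
object `B`. -/
theorem right_class_of_OFS_iff
    {A : Type u} [Category.{v} A] [HasPullbacks A] (M : MorphismProperty A) :
    (∃ E : MorphismProperty A, IsOFS E M) ↔
      ((∀ {X Y Z : A} (f : X ⟶ Y) (g : Y ⟶ Z), M f → M g → M (f ≫ g)) ∧
       (∀ {P X Y Z : A} (fst : P ⟶ X) (snd : P ⟶ Y) (f : X ⟶ Z) (g : Y ⟶ Z),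
          IsPullback fst snd f g → M g → M fst) ∧
       (∀ B : A,
          (ObjectProperty.ι (fun f : Over B => M f.hom)).IsRightAdjoint)) := by
  constructor
  · rintro ⟨E, h⟩
    refine ⟨fun f g hf hg => ?_, fun fst snd f g hP hg => ?_, fun B => ?_⟩
    · exact (h.mem_right_iff _).2 fun _ _ e he => (h.orth e f he hf).comp (h.orth e g he hg)
    · exact (h.mem_right_iff _).2 fun _ _ e he => (h.orth e g he hg).of_isPullback hP
    · refine (isRightAdjoint_ι_over_iff M B).2 fun X f => ?_
      obtain ⟨Z, e, m, he, hm, rfl⟩ := h.factor f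
      exact ⟨Z, e, m, rfl, h.isSliceReflection he hm⟩
  · rintro ⟨hcomp, hpb, hrefl⟩
    have : M.IsStableUnderComposition := ⟨hcomp⟩
    have : M.IsStableUnderBaseChange := ⟨fun hP hg => hpb _ _ _ _ hP.flip hg⟩
    exact ⟨_, isOFS_leftOrthogonalComplement M fun Y => (isRightAdjoint_ι_over_iff M Y).1 (hrefl Y)⟩
end

section
/- For a functor P : 𝒜 → C: (1) P is ∅-topological (every P-structured cone indexed by the empty category admits a P-cartesian lifting) if, and only if, P admits a right-adjoint right-inverse functor; and (2) P is 1-topological (where 1 is the terminal category) if, and only if, P is a Grothendieck fibration. -/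
open CategoryTheory CategoryTheory.Limits

universe w' w v' u' v u

namespace Burroni

variable {A : Type u} [Category.{v} A] {C : Type u'} [Category.{v'} C]

/-- A morphism `f` is `P`-cartesian. -/
def IsCartesianMor (P : A ⥤ C) {X Y : A} (f : X ⟶ Y) : Prop :=
  ∀ {Z : A} (h : Z ⟶ Y) (g : P.obj Z ⟶ P.obj X), g ≫ P.map f = P.map h →
    ∃! k : Z ⟶ X, k ≫ f = h ∧ P.map k = g

/-- `P` is a Grothendieck fibration: every morphism of `C` into the image of an
object admits a `P`-cartesian lifting. -/
def IsGrothendieckFibration (P : A ⥤ C) : Prop :=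
  ∀ (B : A) (X : C) (g : X ⟶ P.obj B),
    ∃ (A₀ : A) (f : A₀ ⟶ B) (hX : P.obj A₀ = X),
      IsCartesianMor P f ∧ P.map f = eqToHom hX ≫ g

variable {J : Type w} [Category.{w'} J]

/-- A cone `c` over `H`, together with an identification `P.obj c.pt = X`, is a
`P`-cartesian lifting of the `P`-structured cone `ξ : ΔX ⟶ H ⋙ P`. -/
def IsCartesianLifting (P : A ⥤ C) {H : J ⥤ A} {X : C}
    (ξ : (Functor.const J).obj X ⟶ H ⋙ P) (c : Cone H) (hpt : P.obj c.pt = X) : Prop :=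
  (∀ j, P.map (c.π.app j) = eqToHom hpt ≫ ξ.app j) ∧
  ∀ (d : Cone H) (g : P.obj d.pt ⟶ X), (∀ j, P.map (d.π.app j) = g ≫ ξ.app j) →
    ∃! f : d.pt ⟶ c.pt, (∀ j, f ≫ c.π.app j = d.π.app j) ∧
      P.map f = g ≫ eqToHom hpt.symm

/-- `P` is `J`-topological: every `J`-indexed `P`-structured cone admits a
`P`-cartesian lifting. -/
def IsTopologicalFor (P : A ⥤ C) (J : Type w) [Category.{w'} J] : Prop :=
  ∀ (H : J ⥤ A) (X : C) (ξ : (Functor.const J).obj X ⟶ H ⋙ P),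
    ∃ (c : Cone H) (hpt : P.obj c.pt = X), IsCartesianLifting P ξ c hpt

/-- A cone `c` in `A` is `P`-cartesian. -/
def IsCartesianCone (P : A ⥤ C) {H : J ⥤ A} (c : Cone H) : Prop :=
  ∀ (d : Cone H) (g : P.obj d.pt ⟶ P.obj c.pt),
    (∀ j, P.map (d.π.app j) = g ≫ P.map (c.π.app j)) →
    ∃! f : d.pt ⟶ c.pt, (∀ j, f ≫ c.π.app j = d.π.app j) ∧ P.map f = g

end Burroni

open Burroni

universe t

section Aux

variable {A : Type u} [Category.{v} A] {C : Type u'} [Category.{v'} C]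

lemma natTrans_app_eq' {D : Type*} [Category D] {F G : C ⥤ D} (α : F ⟶ G) {Y Y' : C}
    (e : Y = Y') :
    α.app Y = eqToHom (congrArg F.obj e) ≫ α.app Y' ≫ eqToHom (congrArg G.obj e).symm := by
  subst e; simp

lemma part1_backward (P : A ⥤ C) (R : C ⥤ A) (adj : P ⊣ R) (h : R ⋙ P = 𝟭 C) :
    IsTopologicalFor P (Discrete PEmpty.{t+1}) := by
  intro H X ξ
  have hX : P.obj (R.obj X) = X := Functor.congr_obj h X
  have h2 : P.obj (R.obj (P.obj (R.obj X))) = P.obj (R.obj X) := Functor.congr_obj h _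
  set ε := adj.counit.app X with hε
  let u : X ⟶ P.obj (R.obj X) :=
    eqToHom hX.symm ≫ P.map (adj.unit.app (R.obj X)) ≫ eqToHom h2
  have happ : adj.counit.app (P.obj (R.obj X)) = eqToHom h2 ≫ ε ≫ eqToHom hX.symm := by
    have := natTrans_app_eq' adj.counit hX
    simpa using this
  have hue : u ≫ ε = 𝟙 X := by
    have tri : P.map (adj.unit.app (R.obj X)) ≫ adj.counit.app (P.obj (R.obj X)) = 𝟙 _ :=
      adj.left_triangle_components _
    rw [happ] at tri
    simp only [u, Category.assoc]
    rw [← cancel_epi (eqToHom hX)]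
    simp only [← Category.assoc]
    simp only [Category.assoc] at tri ⊢
    rw [← cancel_mono (eqToHom hX.symm)]
    simp [tri]
  have heu : ε ≫ u = 𝟙 (P.obj (R.obj X)) := by
    have nat := adj.counit.naturality u
    have hmapu : P.map (R.map u) = eqToHom hX ≫ u ≫ eqToHom h2.symm := by
      have := Functor.congr_hom h u
      simpa using this
    simp only [Functor.comp_map, Functor.id_map] at nat
    rw [hmapu, happ] at nat
    rw [← nat]
    simp [hue, ← Category.assoc]
    simp [Category.assoc, hue]
  let c : Cone H := ⟨R.obj X, ⟨fun j => j.as.elim, by intro j j' f; exact j.as.elim⟩⟩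
  refine ⟨c, hX, fun j => j.as.elim, ?_⟩
  intro d g hg
  set f := (adj.homEquiv d.pt X) (g ≫ eqToHom hX.symm ≫ ε) with hf
  have hsymm : P.map f ≫ ε = g ≫ eqToHom hX.symm ≫ ε := by
    have := (adj.homEquiv d.pt X).symm_apply_apply (g ≫ eqToHom hX.symm ≫ ε)
    rw [adj.homEquiv_counit] at this
    simpa [hε] using this
  have hPf : P.map f = g ≫ eqToHom hX.symm := by
    have : P.map f ≫ ε ≫ u = (g ≫ eqToHom hX.symm ≫ ε) ≫ u := by rw [← Category.assoc, hsymm]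
    simpa [heu, Category.assoc] using this
  refine ⟨f, ⟨fun j => j.as.elim, hPf⟩, ?_⟩
  rintro y ⟨-, hy⟩
  apply (adj.homEquiv d.pt X).symm.injective
  rw [adj.homEquiv_counit, adj.homEquiv_counit, hy, hPf]


lemma part1_forward (P : A ⥤ C) (htop : IsTopologicalFor P (Discrete PEmpty.{t+1})) :
    ∃ R : C ⥤ A, Nonempty (P ⊣ R) ∧ R ⋙ P = 𝟭 C := by
  classical
  let H : Discrete PEmpty.{t+1} ⥤ A := Discrete.functor (fun j => j.elim)
  have spec : ∀ X : C, ∃ (c : Cone H) (hpt : P.obj c.pt = X),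
      IsCartesianLifting P (Discrete.natTrans (fun j => j.as.elim)) c hpt :=
    fun X => htop H X _
  choose c hpt cart using spec
  have key : ∀ (Y : C) (B : A) (g : P.obj B ⟶ Y),
      ∃! f : B ⟶ (c Y).pt, P.map f = g ≫ eqToHom (hpt Y).symm := by
    intro Y B g
    obtain ⟨f, ⟨-, hf⟩, uniq⟩ :=
      (cart Y).2 ⟨B, Discrete.natTrans (fun j => j.as.elim)⟩ g (fun j => j.as.elim)
    exact ⟨f, hf, fun y hy => uniq y ⟨fun j => j.as.elim, hy⟩⟩
  let Rmap : ∀ {X Y : C} (g : X ⟶ Y), (c X).pt ⟶ (c Y).pt :=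
    fun {X Y} g => (key Y (c X).pt (eqToHom (hpt X) ≫ g)).exists.choose
  have hRmap : ∀ {X Y : C} (g : X ⟶ Y),
      P.map (Rmap g) = (eqToHom (hpt X) ≫ g) ≫ eqToHom (hpt Y).symm :=
    fun {X Y} g => (key Y (c X).pt (eqToHom (hpt X) ≫ g)).exists.choose_spec
  let R : C ⥤ A :=
    { obj := fun X => (c X).pt
      map := fun {X Y} g => Rmap g
      map_id := by
        intro X
        exact ((key X (c X).pt (eqToHom (hpt X) ≫ 𝟙 X)).unique (hRmap (𝟙 X)) (by simp))
      map_comp := by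
        intro X Y Z g₁ g₂
        refine ((key Z (c X).pt (eqToHom (hpt X) ≫ (g₁ ≫ g₂))).unique (hRmap _) ?_)
        rw [P.map_comp, hRmap, hRmap]
        simp }
  have hRP : R ⋙ P = 𝟭 C := by
    refine CategoryTheory.Functor.ext (fun X => hpt X) ?_
    intro X Y g
    simpa [R, Category.assoc] using hRmap g
  refine ⟨R, ⟨Adjunction.mkOfHomEquiv
    { homEquiv := fun B X =>
        { toFun := fun g => (key X B g).exists.choose
          invFun := fun f => P.map f ≫ eqToHom (hpt X)
          left_inv := by
            intro g
            show P.map ((key X B g).exists.choose) ≫ eqToHom (hpt X) = g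
            rw [(key X B g).exists.choose_spec]
            simp
          right_inv := by
            intro f
            exact ((key X B (P.map f ≫ eqToHom (hpt X))).unique
              (key X B _).exists.choose_spec (by simp))
      }
      homEquiv_naturality_left_symm := by
        intro B' B X f g
        simp [Category.assoc]
      homEquiv_naturality_right := by
        intro B X Y f g
        show (key Y B (f ≫ g)).exists.choose = (key X B f).exists.choose ≫ R.map g
        refine (key Y B (f ≫ g)).unique (key Y B _).exists.choose_spec ?_
        rw [P.map_comp]
        rw [(key X B f).exists.choose_spec]
        have : P.map (R.map g) = (eqToHom (hpt X) ≫ g) ≫ eqToHom (hpt Y).symm := hRmap g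
        rw [this]
        simp }⟩, hRP⟩


lemma part2_forward (P : A ⥤ C) (htop : IsTopologicalFor P (Discrete PUnit.{t+1})) :
    IsGrothendieckFibration P := by
  intro B X g
  let H : Discrete PUnit.{t+1} ⥤ A := (Functor.const _).obj B
  let ξ : (Functor.const (Discrete PUnit.{t+1})).obj X ⟶ H ⋙ P :=
    { app := fun _ => g
      naturality := by intros; simp [H] }
  obtain ⟨c, hpt, hlift, hcart⟩ := htop H X ξ
  refine ⟨c.pt, c.π.app ⟨⟨⟩⟩, hpt, ?_, hlift ⟨⟨⟩⟩⟩
  intro Z h g' hg'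
  let d : Cone H := ⟨Z, { app := fun _ => h, naturality := by intros; simp [H] }⟩
  have cond : ∀ j, P.map (d.π.app j) = (g' ≫ eqToHom hpt) ≫ ξ.app j := by
    intro j
    show P.map h = (g' ≫ eqToHom hpt) ≫ g
    rw [← hg', hlift ⟨⟨⟩⟩, Category.assoc]
  obtain ⟨k, ⟨hk1, hk2⟩, huniq⟩ := hcart d (g' ≫ eqToHom hpt) cond
  refine ⟨k, ⟨hk1 ⟨⟨⟩⟩, by simpa using hk2⟩, ?_⟩
  rintro y ⟨hy1, hy2⟩
  exact huniq y ⟨fun j => hy1, by simpa using hy2⟩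

lemma part2_backward (P : A ⥤ C) (hfib : IsGrothendieckFibration P) :
    IsTopologicalFor P (Discrete PUnit.{t+1}) := by
  intro H X ξ
  obtain ⟨A₀, f, hX, hcart, hPf⟩ := hfib (H.obj ⟨⟨⟩⟩) X (ξ.app ⟨⟨⟩⟩)
  let c : Cone H := ⟨A₀, Discrete.natTrans (fun j => f)⟩
  refine ⟨c, hX, ?_, ?_⟩
  · rintro ⟨⟨⟩⟩
    exact hPf
  · intro d g hg
    have cond : (g ≫ eqToHom hX.symm) ≫ P.map f = P.map (d.π.app ⟨⟨⟩⟩) := by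
      rw [hPf, hg ⟨⟨⟩⟩]
      simp
    obtain ⟨k, ⟨hk1, hk2⟩, huniq⟩ := hcart (d.π.app ⟨⟨⟩⟩) (g ≫ eqToHom hX.symm) cond
    exact ⟨k, ⟨fun j => hk1, hk2⟩, fun y hy => huniq y ⟨hy.1 ⟨⟨⟩⟩, hy.2⟩⟩

end Aux


/-- `P` is `∅`-topological iff it admits a right-adjoint
right-inverse functor, and `P` is `1`-topological iff it is a Grothendieck
fibration. -/
theorem empty_and_one_topological
    {A : Type u} [Category.{v} A] {C : Type u'} [Category.{v'} C] (P : A ⥤ C) :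
    (IsTopologicalFor P (Discrete PEmpty) ↔
      ∃ R : C ⥤ A, Nonempty (P ⊣ R) ∧ R ⋙ P = 𝟭 C) ∧
    (IsTopologicalFor P (Discrete PUnit) ↔ IsGrothendieckFibration P) := by
  refine ⟨⟨fun h => part1_forward P h, ?_⟩, fun h => part2_forward P h, fun h => part2_backward P h⟩
  rintro ⟨R, ⟨adj⟩, hRP⟩
  exact part1_backward P R adj hRP
end

section
/- Let P : 𝒜 → C be a functor and α : ΔA → H a cone over a diagram H : 𝒥 → 𝒜 such that the image cone Pα : Δ(PA) → P∘H is a limit cone in C. Then α is a limit cone in 𝒜 if, and only if, α is P-cartesian. Consequently, if P is 𝒥-topological and C has limits of all 𝒥-indexed diagrams, then 𝒜 has limits of all 𝒥-indexed diagrams and P preserves them. -/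
open CategoryTheory CategoryTheory.Limits

universe w' w v' u' v u

open Burroni

/-- if `P` maps the cone `α` to a limit cone, then `α` is a limit
cone iff it is `P`-cartesian; consequently a `J`-topological functor lifts and
preserves `J`-indexed limits. -/
theorem limit_iff_cartesian_and_topological_lifts_limits
    {A : Type u} [Category.{v} A] {C : Type u'} [Category.{v'} C] (P : A ⥤ C) :
    (∀ {J : Type w} [Category.{w'} J] {H : J ⥤ A} (α : Cone H),
      Nonempty (IsLimit (P.mapCone α)) →
        (Nonempty (IsLimit α) ↔ IsCartesianCone P α)) ∧
    (∀ (J : Type w) [Category.{w'} J], IsTopologicalFor P J →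
      HasLimitsOfShape J C →
        HasLimitsOfShape J A ∧ Nonempty (PreservesLimitsOfShape J P)) := by
  constructor
  · intro J _ H α ⟨hPα⟩
    constructor
    · intro ⟨hα⟩ d g hg
      refine ⟨hα.lift d, ⟨fun j => hα.fac d j, ?_⟩, ?_⟩
      · apply hPα.hom_ext
        intro j
        have : P.map (hα.lift d) ≫ P.map (α.π.app j) = P.map (d.π.app j) := by
          rw [← P.map_comp, hα.fac]
        simpa [this] using hg j
      · rintro f ⟨hf, -⟩
        exact hα.uniq d f hf
    · intro hcart
      refine ⟨⟨fun d => (hcart d (hPα.lift (P.mapCone d))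
        (fun j => (hPα.fac (P.mapCone d) j).symm)).choose, ?_, ?_⟩⟩
      · intro d j
        exact ((hcart d (hPα.lift (P.mapCone d))
          (fun j => (hPα.fac (P.mapCone d) j).symm)).choose_spec.1).1 j
      · intro d m hm
        apply ((hcart d (hPα.lift (P.mapCone d))
          (fun j => (hPα.fac (P.mapCone d) j).symm)).choose_spec).2
        refine ⟨hm, ?_⟩
        apply hPα.hom_ext
        intro j
        have : P.map m ≫ P.map (α.π.app j) = P.map (d.π.app j) := by
          rw [← P.map_comp, hm]
        simp only [Functor.mapCone_π_app] at this ⊢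
        rw [this]
        exact (hPα.fac (P.mapCone d) j).symm
  · intro J _ htop hC
    have key : ∀ H : J ⥤ A, ∃ c : Cone H, Nonempty (IsLimit c) ∧
        Nonempty (IsLimit (P.mapCone c)) := by
      intro H
      obtain ⟨c, hpt, hlift, hcart⟩ := htop H (limit (H ⋙ P)) (limit.cone (H ⋙ P)).π
      have hPc : IsLimit (P.mapCone c) := by
        refine (limit.isLimit (H ⋙ P)).ofIsoLimit (Cones.ext (eqToIso hpt.symm) ?_)
        intro j
        simp [hlift j]
      refine ⟨c, ⟨⟨fun d => ?_, ?_, ?_⟩⟩, ⟨hPc⟩⟩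
      case refine_1 =>
        exact (hcart d (limit.lift (H ⋙ P) (P.mapCone d))
          (fun j => by simp)).choose
      case refine_2 =>
        intro d j
        exact ((hcart d (limit.lift (H ⋙ P) (P.mapCone d))
          (fun j => by simp)).choose_spec.1).1 j
      case refine_3 =>
        intro d m hm
        apply ((hcart d (limit.lift (H ⋙ P) (P.mapCone d))
          (fun j => by simp)).choose_spec).2
        refine ⟨hm, ?_⟩
        have : P.map m ≫ eqToHom hpt = limit.lift (H ⋙ P) (P.mapCone d) := by
          apply limit.hom_ext
          intro j
          have hmj : P.map m ≫ P.map (c.π.app j) = P.map (d.π.app j) := by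
            rw [← P.map_comp, hm]
          simp only [Category.assoc, limit.lift_π]
          rw [← limit.cone_π, ← hlift j]
          exact hmj
        rw [← this]
        simp
    have hA : HasLimitsOfShape J A := by
      refine ⟨fun H => ?_⟩
      obtain ⟨c, ⟨hc⟩, -⟩ := key H
      exact ⟨⟨c, hc⟩⟩
    refine ⟨hA, ⟨⟨fun {H} => ?_⟩⟩⟩
    obtain ⟨c, ⟨hc⟩, ⟨hPc⟩⟩ := key H
    exact preservesLimit_of_preserves_limit_cone hc hPc
end

section
/- Let R = {(n, m) ∈ ℕ × ℕ : |n − m| ≤ 1} with projections p₁, p₂ : R → ℕ. For every ultrafilter 𝔯 on R, if the pushforward ultrafilter (p₁)∗𝔯 on ℕ is principal (fixed), then 𝔯 itself is principal, and hence (p₂)∗𝔯 is also principal. Consequently, the ultrafilter functor β on Set does not preserve the coequalizer of the reflexive pair (p₁, p₂): the coequalizer of p₁, p₂ in Set identifies all natural numbers, whereas β(p₁) and β(p₂) never identify a principal ultrafilter with a free (non-principal) ultrafilter on ℕ. -/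
open Ultrafilter

/-- The set of pairs of equal or adjacent natural numbers. -/
def AdjPairs : Type := { p : ℕ × ℕ // Nat.dist p.1 p.2 ≤ 1 }

/-- First projection. -/
def adjP₁ : AdjPairs → ℕ := fun p => p.1.1

/-- Second projection. -/
def adjP₂ : AdjPairs → ℕ := fun p => p.1.2

lemma adj_fiber₁_finite (n : ℕ) : {r : AdjPairs | adjP₁ r = n}.Finite := by
  apply Set.Finite.of_finite_image (f := adjP₂)
  · apply Set.Finite.subset (Set.finite_Icc (n - 1) (n + 1))
    rintro m ⟨r, hr, rfl⟩
    have := r.2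
    simp only [Set.mem_setOf_eq, adjP₁] at hr
    simp only [Nat.dist] at this
    simp only [adjP₂, Set.mem_Icc]
    omega
  · rintro r hr s hs h
    simp only [Set.mem_setOf_eq, adjP₁] at hr hs
    unfold adjP₂ at h
    exact Subtype.ext (Prod.ext (hr.trans hs.symm) h)

lemma adj_fiber₂_finite (n : ℕ) : {r : AdjPairs | adjP₂ r = n}.Finite := by
  apply Set.Finite.of_finite_image (f := adjP₁)
  · apply Set.Finite.subset (Set.finite_Icc (n - 1) (n + 1))
    rintro m ⟨r, hr, rfl⟩
    have := r.2
    simp only [Set.mem_setOf_eq, adjP₂] at hr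
    simp only [Nat.dist] at this
    simp only [adjP₁, Set.mem_Icc]
    omega
  · rintro r hr s hs h
    simp only [Set.mem_setOf_eq, adjP₂] at hr hs
    unfold adjP₁ at h
    exact Subtype.ext (Prod.ext h (hr.trans hs.symm))

lemma adj_principal {f : AdjPairs → ℕ}
    (hfin : ∀ n, {r : AdjPairs | f r = n}.Finite)
    (𝔯 : Ultrafilter AdjPairs) (n : ℕ) (h : 𝔯.map f = pure n) :
    ∃ r : AdjPairs, 𝔯 = pure r := by
  have hmem : {r : AdjPairs | f r = n} ∈ 𝔯 := by
    have : {n} ∈ 𝔯.map f := by rw [h]; exact Ultrafilter.mem_pure.2 rfl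
    simpa [Ultrafilter.mem_map, Set.preimage, Set.mem_singleton_iff] using this
  obtain ⟨r, _, hr⟩ := Ultrafilter.eq_pure_of_finite_mem (hfin n) hmem
  exact ⟨r, hr⟩

/-- if the pushforward of an ultrafilter `𝔯` on `AdjPairs` along
the first projection is principal, then `𝔯` is principal, and hence so is its
pushforward along the second projection.  Consequently, while the coequalizer of
`(adjP₁, adjP₂)` in `Set` identifies all natural numbers (and the pair is
reflexive, the diagonal being a common section), the ultrafilter functor never
identifies a principal ultrafilter with a free one. -/
theorem ultrafilter_functor_does_not_preserve_reflexive_coequalizer :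
    (∀ 𝔯 : Ultrafilter AdjPairs,
      (∃ n : ℕ, 𝔯.map adjP₁ = pure n) →
        (∃ r : AdjPairs, 𝔯 = pure r) ∧ ∃ m : ℕ, 𝔯.map adjP₂ = pure m) ∧
    (∃ s : ℕ → AdjPairs, (∀ n, adjP₁ (s n) = n) ∧ (∀ n, adjP₂ (s n) = n)) ∧
    (∀ {Z : Type} (g : ℕ → Z), (∀ r : AdjPairs, g (adjP₁ r) = g (adjP₂ r)) →
      ∀ n m : ℕ, g n = g m) ∧
    (∀ 𝔯 : Ultrafilter AdjPairs,
      ¬((∃ n : ℕ, 𝔯.map adjP₁ = pure n) ∧ ¬(∃ m : ℕ, 𝔯.map adjP₂ = pure m)) ∧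
      ¬((∃ m : ℕ, 𝔯.map adjP₂ = pure m) ∧ ¬(∃ n : ℕ, 𝔯.map adjP₁ = pure n))) := by
  have hp1 : ∀ 𝔯 : Ultrafilter AdjPairs,
      (∃ n : ℕ, 𝔯.map adjP₁ = pure n) → ∃ r : AdjPairs, 𝔯 = pure r := by
    rintro 𝔯 ⟨n, h⟩; exact adj_principal adj_fiber₁_finite 𝔯 n h
  have hp2 : ∀ 𝔯 : Ultrafilter AdjPairs,
      (∃ n : ℕ, 𝔯.map adjP₂ = pure n) → ∃ r : AdjPairs, 𝔯 = pure r := by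
    rintro 𝔯 ⟨n, h⟩; exact adj_principal adj_fiber₂_finite 𝔯 n h
  have key : ∀ 𝔯 : Ultrafilter AdjPairs, (∃ r : AdjPairs, 𝔯 = pure r) →
      (∃ n, 𝔯.map adjP₁ = pure n) ∧ ∃ m, 𝔯.map adjP₂ = pure m := by
    rintro 𝔯 ⟨r, rfl⟩
    exact ⟨⟨adjP₁ r, by simp⟩, ⟨adjP₂ r, by simp⟩⟩
  refine ⟨fun 𝔯 h => ⟨hp1 𝔯 h, (key 𝔯 (hp1 𝔯 h)).2⟩, ?_, ?_, ?_⟩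
  · exact ⟨fun n => ⟨(n, n), by simp [Nat.dist]⟩, fun n => rfl, fun n => rfl⟩
  · intro Z g hg n m
    have step : ∀ k, g k = g 0 := by
      intro k
      induction k with
      | zero => rfl
      | succ k ih =>
        have := hg ⟨(k, k + 1), by simp [Nat.dist]⟩
        simp only [adjP₁, adjP₂] at this
        rw [← this, ih]
    rw [step n, step m]
  · intro 𝔯
    constructor
    · rintro ⟨h1, h2⟩; exact h2 (key 𝔯 (hp1 𝔯 h1)).2
    · rintro ⟨h1, h2⟩; exact h2 (key 𝔯 (hp2 𝔯 h1)).1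
end

section
/- For a continuous map f : X → Y of topological spaces, the following are equivalent: (i) for every ultrafilter 𝔵 on X such that the pushforward ultrafilter f∗𝔵 converges to a point y ∈ Y, the ultrafilter 𝔵 converges in X to exactly one point x of the fibre f⁻¹(y); (ii) f is proper (every pullback of f is a closed map; equivalently, f is closed with compact fibres) and f is Hausdorff-separated (any two distinct points in the same fibre of f admit disjoint open neighbourhoods in X). -/
open Filter Topology

/-- for a continuous map `f : X → Y`, every ultrafilter on `X`
whose pushforward converges to some `y` converges to exactly one point of the
fibre over `y` if, and only if, `f` is proper (stably closed) and
Hausdorff-separated (distinct points of a fibre can be separated by disjoint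
open sets). -/
theorem perfect_iff_proper_and_separated
    {X : Type*} {Y : Type*} [TopologicalSpace X] [TopologicalSpace Y]
    (f : X → Y) (hf : Continuous f) :
    (∀ (𝔵 : Ultrafilter X) (y : Y), (𝔵.map f : Filter Y) ≤ 𝓝 y →
      ∃! x : X, f x = y ∧ (𝔵 : Filter X) ≤ 𝓝 x) ↔
    (IsProperMap f ∧
      ∀ x x' : X, x ≠ x' → f x = f x' →
        ∃ U V : Set X, IsOpen U ∧ IsOpen V ∧ x ∈ U ∧ x' ∈ V ∧ Disjoint U V) := by
  constructor
  · intro h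
    constructor
    · rw [isProperMap_iff_ultrafilter]
      refine ⟨hf, fun 𝔵 y hy => ?_⟩
      obtain ⟨x, hx, -⟩ := h 𝔵 y hy
      exact ⟨x, hx.1, hx.2⟩
    · intro x x' hne hfx
      by_contra hsep
      have hdisj : ¬ Disjoint (𝓝 x) (𝓝 x') := by
        intro hd
        rw [Filter.disjoint_iff] at hd
        obtain ⟨s, hs, t, ht, hst⟩ := hd
        obtain ⟨U, hUs, hU, hxU⟩ := mem_nhds_iff.mp hs
        obtain ⟨V, hVt, hV, hxV⟩ := mem_nhds_iff.mp ht
        exact hsep ⟨U, V, hU, hV, hxU, hxV, hst.mono hUs hVt⟩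
      have hne' : 𝓝 x ⊓ 𝓝 x' ≠ ⊥ := by
        exact fun hb => hdisj (disjoint_iff.mpr hb)
      haveI : Filter.NeBot (𝓝 x ⊓ 𝓝 x') := ⟨hne'⟩
      obtain ⟨𝔵, h𝔵⟩ := Filter.exists_ultrafilter_le (𝓝 x ⊓ 𝓝 x')
      have hmap : (𝔵.map f : Filter Y) ≤ 𝓝 (f x) :=
        le_trans (Filter.map_mono (h𝔵.trans inf_le_left)) (hf.tendsto x)
      obtain ⟨z, -, huniq⟩ := h 𝔵 (f x) hmap
      have hx : x = z := huniq x ⟨rfl, h𝔵.trans inf_le_left⟩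
      have hx' : x' = z := huniq x' ⟨hfx.symm, h𝔵.trans inf_le_right⟩
      exact hne (hx.trans hx'.symm)
  · rintro ⟨hp, hsep⟩ 𝔵 y hy
    obtain ⟨x, hx, hconv⟩ := (isProperMap_iff_ultrafilter.mp hp).2 hy
    refine ⟨x, ⟨hx, hconv⟩, fun x' hx' => ?_⟩
    by_contra hne
    obtain ⟨U, V, hU, hV, hxU, hxV, hUV⟩ :=
      hsep x' x hne (hx'.1.trans hx.symm)
    have h1 : U ∈ 𝔵 := hx'.2 (hU.mem_nhds hxU)
    have h2 : V ∈ 𝔵 := hconv (hV.mem_nhds hxV)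
    have h3 : U ∩ V ∈ 𝔵 := Filter.inter_mem h1 h2
    rw [Set.disjoint_iff_inter_eq_empty.mp hUV] at h3
    exact 𝔵.empty_notMem h3
end
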